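/- arXiv:2103.07312 — 3 statements merged into one kernel-verified Lean document; each statement's English description precedes it below -/
import Mathlib

section
/- Let N be a normal subgroup of a finite group G and let ϑ be an irreducible complex character of N. If the induced character ϑ^G is irreducible, then the centralizer C_G(N) is contained in N. -/
/-!
Write `ϑ^t` for `m ↦ ϑ (t m t⁻¹)`. Since `ϑ^G` vanishes off `N`, expanding it gives
`[ϑ^G, ϑ^G] = |N|⁻¹ ∑_{t ∈ G} [ϑ, ϑ^t]`. Each `[ϑ, ϑ^t]` is a natural number (the dimension of the
invariants of `ρ ⊗ conj ρ^t`), and it equals `1` on the inertia group `T = {t | ϑ^t = ϑ}`. So if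
`ϑ^G` is irreducible then `|T| ≤ |N|`; as `N ≤ T` (characters are class functions) and `C_G(N) ≤ T`,
this forces `T = N`, whence `C_G(N) ≤ N`.
-/

open scoped BigOperators Classical

namespace CTC

noncomputable def cfInner (G : Type) [Group G] [Fintype G] (φ ψ : G → ℂ) : ℂ :=
  (Fintype.card G : ℂ)⁻¹ * ∑ g : G, φ g * star (ψ g)

def IsChar (G : Type) [Group G] [Fintype G] (χ : G → ℂ) : Prop :=
  ∃ (n : ℕ) (ρ : Representation ℂ G (Fin n → ℂ)),
    ∀ g : G, χ g = LinearMap.trace ℂ (Fin n → ℂ) (ρ g)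

def IsIrrChar (G : Type) [Group G] [Fintype G] (χ : G → ℂ) : Prop :=
  IsChar G χ ∧ cfInner G χ χ = 1

noncomputable def Ind {G : Type} [Group G] [Fintype G] (H : Subgroup G) (φ : ↥H → ℂ) :
    G → ℂ := fun g =>
  (Fintype.card ↥H : ℂ)⁻¹ *
    ∑ x : G, if h : x * g * x⁻¹ ∈ H then φ ⟨x * g * x⁻¹, h⟩ else 0

open Representation

noncomputable def conjRep {H : Type} [Group H] {n : ℕ} (ρ : Representation ℂ H (Fin n → ℂ)) :
    Representation ℂ H (Fin n → ℂ) :=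
  Matrix.toLinAlgEquiv'.toMonoidHom.comp <|
    (starRingEnd ℂ).mapMatrix.toMonoidHom.comp <| Matrix.toLinAlgEquiv'.symm.toMonoidHom.comp ρ

theorem char_conjRep {H : Type} [Group H] {n : ℕ} (ρ : Representation ℂ H (Fin n → ℂ)) (g : H) :
    (conjRep ρ).character g = star (ρ.character g) := by
  simp [conjRep, character, Matrix.trace, LinearMap.trace_eq_matrix_trace ℂ (Pi.basisFun ℂ (Fin n))]

section Characters

variable {H : Type} [Group H] [Fintype H] {χ ψ : H → ℂ}

theorem IsChar.apply_conj (hχ : IsChar H χ) (a b : H) : χ (a * b * a⁻¹) = χ b := by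
  obtain ⟨n, ρ, hρ⟩ := hχ
  rw [hρ, hρ]
  exact ρ.char_conj b a

theorem IsChar.comp {K F : Type} [Group K] [Fintype K] [FunLike F K H] [MonoidHomClass F K H]
    (hχ : IsChar H χ) (φ : F) : IsChar K (χ ∘ φ) := by
  obtain ⟨n, ρ, hρ⟩ := hχ
  exact ⟨n, ρ.comp φ, fun g => hρ (φ g)⟩

theorem IsChar.exists_cfInner_eq_natCast (hχ : IsChar H χ) (hψ : IsChar H ψ) :
    ∃ d : ℕ, cfInner H χ ψ = d := by
  obtain ⟨n, ρ, hρ⟩ := hχ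
  obtain ⟨m, σ, hσ⟩ := hψ
  have : Invertible (Nat.card H : ℂ) := invertibleOfNonzero (by simp)
  refine ⟨Module.finrank ℂ (invariants (tprod ρ (conjRep σ))), ?_⟩
  rw [← card_inv_mul_sum_char_eq_finrank, char_tensor, cfInner, Nat.card_eq_fintype_card]
  simp only [Pi.mul_apply, char_conjRep]
  simp only [character, ← hρ, ← hσ]

end Characters

section Induction

variable {G : Type} [Group G] [Fintype G] (N : Subgroup G) [N.Normal]

theorem Ind_eq_zero_of_notMem (φ : N → ℂ) {g : G} (hg : g ∉ N) : Ind N φ g = 0 := by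
  refine mul_eq_zero_of_right _ (Finset.sum_eq_zero fun x _ => dif_neg fun hx => hg ?_)
  simpa [mul_assoc] using ‹N.Normal›.conj_mem _ hx x⁻¹

theorem Ind_apply_coe (φ : N → ℂ) (m : N) :
    Ind N φ m = (Fintype.card N : ℂ)⁻¹ * ∑ x : G, φ (MulAut.conjNormal x m) := by
  refine congrArg _ (Finset.sum_congr rfl fun x _ => ?_)
  rw [dif_pos (by simpa using (MulAut.conjNormal x m).2)]
  congr

theorem sum_conjNormal_mul_star_conjNormal (φ : N → ℂ) (x y : G) :
    ∑ m : N, φ (MulAut.conjNormal x m) * star (φ (MulAut.conjNormal y m)) =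
      Fintype.card N * cfInner N φ (φ ∘ MulAut.conjNormal (y * x⁻¹)) := by
  rw [cfInner, mul_inv_cancel_left₀ (by simp)]
  refine Fintype.sum_equiv (MulAut.conjNormal x).toEquiv _ _ fun m => ?_
  rw [Function.comp_apply, MulEquiv.toEquiv_eq_coe, MulEquiv.coe_toEquiv, ← MulAut.mul_apply,
    ← map_mul, inv_mul_cancel_right]

theorem cfInner_Ind_self (φ : N → ℂ) :
    cfInner G (Ind N φ) (Ind N φ) =
      (Fintype.card N : ℂ)⁻¹ * ∑ t : G, cfInner N φ (φ ∘ MulAut.conjNormal t) := by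
  have hN : (Fintype.card N : ℂ) ≠ 0 := by simp
  have hG : (Fintype.card G : ℂ) ≠ 0 := by simp
  have hsum : ∑ g : G, Ind N φ g * star (Ind N φ g) = ∑ m : N, Ind N φ m * star (Ind N φ m) := by
    rw [← Fintype.sum_subtype_add_sum_subtype (· ∈ N),
      Fintype.sum_eq_zero (fun g : {g // g ∉ N} => Ind N φ g * star (Ind N φ g))
        fun g => by simp [Ind_eq_zero_of_notMem N φ g.2], add_zero]
  have hdiag (m : N) : Ind N φ m * star (Ind N φ m) = (Fintype.card N : ℂ)⁻¹ ^ 2 *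
      ∑ x : G, ∑ y : G, φ (MulAut.conjNormal x m) * star (φ (MulAut.conjNormal y m)) := by
    rw [Ind_apply_coe, star_mul', star_sum, star_inv₀, star_natCast, mul_mul_mul_comm,
      Finset.sum_mul_sum, sq]
  have hshift (x : G) : ∑ y : G, cfInner N φ (φ ∘ MulAut.conjNormal (y * x⁻¹)) =
      ∑ t : G, cfInner N φ (φ ∘ MulAut.conjNormal t) :=
    Equiv.sum_comp (Equiv.mulRight x⁻¹) fun t => cfInner N φ (φ ∘ MulAut.conjNormal t)
  calc cfInner G (Ind N φ) (Ind N φ)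
      = (Fintype.card G : ℂ)⁻¹ * (Fintype.card N : ℂ)⁻¹ ^ 2 * ∑ x : G, ∑ y : G,
          ∑ m : N, φ (MulAut.conjNormal x m) * star (φ (MulAut.conjNormal y m)) := by
        rw [cfInner, hsum, mul_assoc]
        simp_rw [hdiag]
        rw [← Finset.mul_sum, Finset.sum_comm]
        exact congrArg _ (congrArg _ (Finset.sum_congr rfl fun x _ => Finset.sum_comm))
    _ = (Fintype.card G : ℂ)⁻¹ * (Fintype.card N : ℂ)⁻¹ * ∑ x : G,
          ∑ t : G, cfInner N φ (φ ∘ MulAut.conjNormal t) := by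
        simp_rw [sum_conjNormal_mul_star_conjNormal, ← Finset.mul_sum, hshift]
        field_simp
    _ = _ := by
        rw [Finset.sum_const, Finset.card_univ, nsmul_eq_mul]
        field_simp

end Induction

section Inertia

variable {G : Type} [Group G] (N : Subgroup G) [N.Normal]

def inertiaSubgroup (φ : N → ℂ) : Subgroup G where
  carrier := {t | φ ∘ MulAut.conjNormal t = φ}
  one_mem' := by simp
  mul_mem' {s t} hs ht := by
    simp only [Set.mem_ofPred_eq, map_mul, MulAut.coe_mul, ← Function.comp_assoc] at *
    rw [hs, ht]
  inv_mem' {t} ht := by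
    simp only [Set.mem_ofPred_eq] at *
    conv_lhs => rw [← ht, Function.comp_assoc, ← MulAut.coe_mul, ← map_mul, mul_inv_cancel]
    simp

theorem IsChar.le_inertiaSubgroup [Fintype G] {φ : N → ℂ} (hφ : IsChar N φ) :
    N ≤ inertiaSubgroup N φ :=
  fun m hm => funext fun n => by
    simp [MulAut.conjNormal_val (h := ⟨m, hm⟩), hφ.apply_conj]

theorem centralizer_le_inertiaSubgroup (φ : N → ℂ) :
    Subgroup.centralizer (N : Set G) ≤ inertiaSubgroup N φ :=
  fun c hc => funext fun n => by
    rw [Function.comp_apply]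
    congr 1
    ext
    rw [MulAut.conjNormal_apply, ← Subgroup.mem_centralizer_iff.mp hc n n.2, mul_inv_cancel_right]

theorem card_inertiaSubgroup_le [Fintype G] {φ : N → ℂ} (hφ : IsIrrChar N φ)
    (hind : cfInner G (Ind N φ) (Ind N φ) = 1) : Nat.card (inertiaSubgroup N φ) ≤ Nat.card N := by
  choose d hd using fun t : G => hφ.1.exists_cfInner_eq_natCast (hφ.1.comp (MulAut.conjNormal t))
  have hsum : ∑ t, d t = Fintype.card N := by
    rw [cfInner_Ind_self, inv_mul_eq_one₀ (by simp)] at hind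
    simp only [hd] at hind
    exact_mod_cast hind.symm
  have hfix (t : G) (ht : t ∈ inertiaSubgroup N φ) : d t = 1 := by
    have ht : φ ∘ MulAut.conjNormal t = φ := ht
    have := hd t
    rw [ht, hφ.2] at this
    exact_mod_cast this.symm
  calc Nat.card (inertiaSubgroup N φ)
      = ∑ t ∈ Finset.univ.filter (· ∈ inertiaSubgroup N φ), d t := by
        rw [Finset.sum_congr rfl fun t ht => hfix t (Finset.mem_filter.mp ht).2]
        simp [Nat.card_eq_fintype_card, Fintype.card_subtype]
    _ ≤ ∑ t, d t := Finset.sum_le_sum_of_subset (Finset.filter_subset _ _)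
    _ = Nat.card N := hsum.trans Nat.card_eq_fintype_card.symm

end Inertia

/-- if `N ⊴ G`, `ϑ ∈ Irr(N)` and `ϑ^G` is irreducible, then `C_G(N) ≤ N`. -/
theorem induced_irreducible_centralizer_le {G : Type} [Group G] [Fintype G]
    (N : Subgroup G) (hN : N.Normal) (ϑ : ↥N → ℂ) (hϑ : IsIrrChar ↥N ϑ)
    (hind : IsIrrChar G (Ind N ϑ)) :
    Subgroup.centralizer (N : Set G) ≤ N := by
  have hT : N = inertiaSubgroup N ϑ :=
    Subgroup.eq_of_le_of_card_ge (hϑ.1.le_inertiaSubgroup N) (card_inertiaSubgroup_le N hϑ hind.2)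
  exact (centralizer_le_inertiaSubgroup N ϑ).trans hT.ge

end CTC
end

section
/- Let G be a finite group, p a prime, and Z ≤ Z(G) a p-subgroup with Z < O_p(G). Let 𝔑(G,Z) be the set of chains Z = D_0 < D_1 < ... < D_n of p-subgroups of G such that each D_i is normal in D_n. Then there is a self-inverse bijection *: 𝔑(G,Z) → 𝔑(G,Z) such that |δ*| = |δ| ± 1, the stabilizers satisfy G_δ = G_{δ*}, and * commutes with the conjugation action of N_Aut := any group of automorphisms of G fixing Z (in particular with G-conjugation). -/
open scoped BigOperators Classical

namespace CTC

/-- `O_p(G)`, the largest normal `p`-subgroup of `G`: the intersection of the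
Sylow `p`-subgroups. -/
noncomputable def pCore (p : ℕ) (G : Type) [Group G] : Subgroup G :=
  ⨅ P : Sylow p G, (P : Subgroup G)

/-- A normal `p`-chain `Z = D_0 < D_1 < ... < D_n` of `p`-subgroups of `G`
starting at `Z`, with every term normal in the last one. -/
structure NormalPChain (p : ℕ) (G : Type) [Group G] (Z : Subgroup G) where
  n : ℕ
  D : Fin (n + 1) → Subgroup G
  strictMono : StrictMono D
  first : D 0 = Z
  isPGroup : ∀ i, IsPGroup p (D i)
  normalInLast : ∀ i, ((D i).subgroupOf (D (Fin.last n))).Normal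

/-- The stabilizer `G_δ = ⋂ᵢ N_G(Dᵢ)` of a chain. -/
def stabChain {p : ℕ} {G : Type} [Group G] {Z : Subgroup G}
    (δ : NormalPChain p G Z) : Subgroup G :=
  ⨅ i, Subgroup.normalizer (δ.D i : Set G)

/-- The image of a chain under an automorphism of `G` fixing `Z`. -/
def mapChain {p : ℕ} {G : Type} [Group G] {Z : Subgroup G}
    (σ : MulAut G) (hσ : Z.map σ.toMonoidHom = Z)
    (δ : NormalPChain p G Z) : NormalPChain p G Z where
  n := δ.n
  D := fun i => (δ.D i).map σ.toMonoidHom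
  strictMono := by
    intro i j hij
    have h1 : (δ.D i).map σ.toMonoidHom ≤ (δ.D j).map σ.toMonoidHom :=
      Subgroup.map_mono (δ.strictMono hij).le
    have h2 : (δ.D i).map σ.toMonoidHom ≠ (δ.D j).map σ.toMonoidHom := by
      intro h
      exact (δ.strictMono hij).ne (Subgroup.map_injective σ.injective h)
    exact lt_of_le_of_ne h1 h2
  first := by show (δ.D 0).map σ.toMonoidHom = Z; rw [δ.first, hσ]
  isPGroup := fun i => (δ.isPGroup i).map _
  normalInLast := by
    intro i
    have h := δ.normalInLast i
    constructor
    rintro a ha b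
    rw [Subgroup.mem_subgroupOf] at ha ⊢
    obtain ⟨v, hv, hva⟩ := ha
    obtain ⟨u, hu, hub⟩ := b.2
    have hvlast : v ∈ δ.D (Fin.last δ.n) := δ.strictMono.monotone (Fin.le_last i) hv
    have hconj := h.conj_mem ⟨v, hvlast⟩ (by rwa [Subgroup.mem_subgroupOf]) ⟨u, hu⟩
    rw [Subgroup.mem_subgroupOf] at hconj
    refine ⟨u * v * u⁻¹, hconj, ?_⟩
    push_cast
    rw [map_mul, map_mul, map_inv, hva, hub]

/-!
Adjoining `O_p(G)` itself to a chain may destroy the normality of its terms in the last one,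
so a smaller canonical subgroup is toggled instead. Let `P = O_p(G) ⊔ D_n` (`coreSup`) and
let `Y` (`centralCore`) be the elements of `O_p(G)` centralizing `P` modulo `Z`. The `p`-group
`P/Z` acts by conjugation on the nontrivial normal `p`-subgroup `O_p(G)/Z`, so it has a
nontrivial fixed point and `Y > Z`; and `Y` normalizes every subgroup between `Z` and `P`.
Let `D` be the largest term of the chain not containing `Y` (`Z` is one) and `W = D ⊔ Y`
(`pairingSubgroup`); `W` is comparable with every term. Adding or removing `W` changes
neither `P` (since `W ≤ O_p(G) ⊔ D`) nor the terms not containing `Y`, hence not `W`: toggling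
`W` is an involution changing the length by one. Everything is defined canonically from the
chain and `Z`, so the construction commutes with automorphisms fixing `Z`; applied to
conjugation by an element of `G_δ`, this shows that `G_δ` normalizes `W`.
-/

open Subgroup
open scoped commutatorElement

theorem sup_id_mem_of_isChain {α : Type*} [SemilatticeSup α] [OrderBot α] {s : Finset α}
    (hs : IsChain (· ≤ ·) (s : Set α)) (hne : s.Nonempty) : s.sup id ∈ s := by
  rw [← Finset.sup'_eq_sup hne]
  refine Finset.sup'_mem _ (fun x hx y hy => ?_) _ hne _ fun i hi => hi
  rcases hs.total hx hy with hxy | hyx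
  · rwa [sup_of_le_right hxy]
  · rwa [sup_of_le_left hyx]

theorem map_finset_sup_id {G H : Type*} [Group G] [Group H] (f : G →* H)
    (C : Finset (Subgroup G)) :
    (C.sup id).map f = (C.image (map f)).sup id := by
  rw [Finset.sup_image, Finset.apply_sup_eq_sup_comp _ (fun H K => map_sup H K f) (map_bot f)]
  rfl

section Toggle

variable {α β : Type*} [DecidableEq α] [DecidableEq β]

def toggle (a : α) (s : Finset α) : Finset α :=
  if a ∈ s then s.erase a else insert a s

theorem toggle_toggle_of_eq {F : Finset α → α} {s : Finset α}
    (hF : F (toggle (F s) s) = F s) : toggle (F (toggle (F s) s)) (toggle (F s) s) = s := by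
  rw [hF]
  by_cases ha : F s ∈ s <;> simp [toggle, ha]

theorem card_toggle (a : α) (s : Finset α) :
    (toggle a s).card = s.card + 1 ∨ (toggle a s).card + 1 = s.card := by
  unfold toggle
  split_ifs with ha
  · exact .inr (Finset.card_erase_add_one ha)
  · exact .inl (Finset.card_insert_of_notMem ha)

theorem image_toggle {f : α → β} (hf : Function.Injective f) (a : α) (s : Finset α) :
    (toggle a s).image f = toggle (f a) (s.image f) := by
  have hfa : f a ∈ s.image f ↔ a ∈ s := hf.mem_finset_image
  by_cases ha : a ∈ s
  · rw [toggle, if_pos ha, toggle, if_pos (hfa.mpr ha), Finset.image_erase hf]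
  · rw [toggle, if_neg ha, toggle, if_neg (mt hfa.mp ha), Finset.image_insert]

end Toggle

theorem normal_of_le_center {G : Type} [Group G] {H : Subgroup G} (h : H ≤ center G) :
    H.Normal :=
  ⟨fun n hn g => by rwa [mem_center_iff.mp (h hn) g, mul_inv_cancel_right]⟩

section PCore

variable {G : Type} [Group G] {p : ℕ}

theorem map_pCore [Fact p.Prime] (σ : MulAut G) : (pCore p G).map σ.toMonoidHom = pCore p G := by
  have hSylow (P : Sylow p G) : (P : Subgroup G).map σ.toMonoidHom = ↑(σ • P) := by
    rw [Sylow.pointwise_smul_def]; rfl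
  rw [pCore, map_iInf σ.toMonoidHom σ.injective]
  simp_rw [hSylow]
  exact (MulAction.toPerm σ : Equiv.Perm (Sylow p G)).iInf_congr fun _ => rfl

instance pCore_characteristic [Fact p.Prime] : (pCore p G).Characteristic :=
  characteristic_iff_map_eq.mpr map_pCore

theorem isPGroup_pCore : IsPGroup p (pCore p G) :=
  (default : Sylow p G).isPGroup'.to_le (iInf_le _ _)

end PCore

theorem IsPGroup.exists_ne_one_mem_centralizer {H : Type*} [Group H] [Finite H] {p : ℕ}
    [Fact p.Prime] {N P : Subgroup H} [N.Normal] (hN : IsPGroup p N) (hP : IsPGroup p P)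
    (hN1 : N ≠ ⊥) : ∃ n ∈ N, n ≠ 1 ∧ n ∈ centralizer (P : Set H) := by
  let _ : MulAction P N :=
    MulAction.compHom N ((ConjAct.toConjAct : H ≃* ConjAct H).toMonoidHom.comp P.subtype)
  have smul_val (g : P) (n : N) : ((g • n : N) : H) = g * n * (g : H)⁻¹ :=
    ConjAct.toConjAct_smul (g : H) (n : H)
  have hdvd : p ∣ Nat.card N := hN.card_eq_or_dvd.resolve_left (mt card_eq_one.mp hN1)
  obtain ⟨n, hn, hn1⟩ := hP.exists_fixed_point_of_prime_dvd_card_of_fixed_point N hdvd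
    (a := 1) fun g => Subtype.ext (by simp [smul_val])
  refine ⟨n, n.2, fun h => hn1 (Subtype.ext h.symm), mem_centralizer_iff.mpr fun g hg => ?_⟩
  have := smul_val ⟨g, hg⟩ n
  rw [hn ⟨g, hg⟩] at this
  exact mul_inv_eq_iff_eq_mul.mp this.symm

section CentralizerMod

variable {G : Type} [Group G] (Z : Subgroup G) [Z.Normal]

def centralizerMod (P : Subgroup G) : Subgroup G :=
  (centralizer (P.map (QuotientGroup.mk' Z) : Set (G ⧸ Z))).comap (QuotientGroup.mk' Z)

variable {Z}

theorem mem_centralizerMod {P : Subgroup G} {g : G} :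
    g ∈ centralizerMod Z P ↔ ∀ x ∈ P, ⁅g, x⁆ ∈ Z := by
  simp only [centralizerMod, mem_comap, mem_centralizer_iff, coe_map, Set.forall_mem_image,
    SetLike.mem_coe]
  refine forall₂_congr fun x _ => ?_
  rw [← QuotientGroup.eq_one_iff, ← QuotientGroup.mk'_apply, map_commutatorElement,
    commutatorElement_eq_one_iff_mul_comm, eq_comm]

theorem centralizerMod_le_normalizer [Finite G] {P E : Subgroup G} (hZE : Z ≤ E) (hEP : E ≤ P) :
    centralizerMod Z P ≤ normalizer (E : Set G) := fun g hg =>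
  mem_normalizer_fintype fun x hx => by
    rw [← MulAut.conj_apply, conj_eq_commutatorElement_mul]
    exact mul_mem (hZE (mem_centralizerMod.mp hg x (hEP hx))) hx

theorem map_centralizerMod {σ : MulAut G} (hσ : Z.map σ.toMonoidHom = Z) (P : Subgroup G) :
    (centralizerMod Z P).map σ.toMonoidHom = centralizerMod Z (P.map σ.toMonoidHom) := by
  ext g
  rw [mem_map_equiv]
  simp only [mem_centralizerMod, mem_map, MulEquiv.coe_toMonoidHom, forall_exists_index,
    and_imp, forall_apply_eq_imp_iff₂]
  refine forall₂_congr fun x _ => ?_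
  conv_rhs => rw [← σ.apply_symm_apply g, ← map_commutatorElement, ← hσ]
  exact (mem_map_iff_mem σ.injective).symm

theorem not_inf_centralizerMod_le [Finite G] {p : ℕ} [Fact p.Prime] {R P : Subgroup G}
    [R.Normal] (hR : IsPGroup p R) (hZR : Z < R) (hP : IsPGroup p P) :
    ¬ R ⊓ centralizerMod Z P ≤ Z := by
  have hRZ : R.map (QuotientGroup.mk' Z) ≠ ⊥ := by
    rw [Ne, Subgroup.map_eq_bot_iff, QuotientGroup.ker_mk']
    exact hZR.not_ge
  obtain ⟨_, ⟨y, hyR, rfl⟩, hy1, hyP⟩ :=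
    IsPGroup.exists_ne_one_mem_centralizer (hR.map _) (hP.map (QuotientGroup.mk' Z)) hRZ
  exact fun hle => hy1 ((QuotientGroup.eq_one_iff y).mpr (hle ⟨hyR, hyP⟩))

end CentralizerMod

-- A normal `p`-chain encoded by its set of terms; its last term is `C.sup id`.
structure IsNormalPChain {G : Type} [Group G] (p : ℕ) (Z : Subgroup G)
    (C : Finset (Subgroup G)) : Prop where
  base_mem : Z ∈ C
  base_le : ∀ D ∈ C, Z ≤ D
  isChain : IsChain (· ≤ ·) (C : Set (Subgroup G))
  isPGroup : ∀ D ∈ C, IsPGroup p D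
  sup_le_normalizer : ∀ D ∈ C, C.sup id ≤ normalizer (D : Set G)

section Chains

variable {G : Type} [Group G] {p : ℕ} {Z : Subgroup G}

noncomputable def chainSet (δ : NormalPChain p G Z) : Finset (Subgroup G) :=
  Finset.univ.image δ.D

theorem card_chainSet (δ : NormalPChain p G Z) : (chainSet δ).card = δ.n + 1 := by
  rw [chainSet, Finset.card_image_of_injective _ δ.strictMono.injective, Finset.card_univ,
    Fintype.card_fin]

theorem chainSet_injective : Function.Injective (chainSet : NormalPChain p G Z → _) := by
  rintro ⟨n, D, hD, _, _, _⟩ ⟨n', D', hD', _, _, _⟩ h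
  obtain rfl : n = n' := by simpa [card_chainSet] using congrArg Finset.card h
  have hrange : Set.range D = Set.range D' := by
    simpa [chainSet] using congrArg (fun s : Finset (Subgroup G) => (s : Set (Subgroup G))) h
  obtain rfl := (hD.range_inj hD').mp hrange
  rfl

theorem chainSet_mapChain (σ : MulAut G) (hσ : Z.map σ.toMonoidHom = Z)
    (δ : NormalPChain p G Z) :
    chainSet (mapChain σ hσ δ) = (chainSet δ).image (map σ.toMonoidHom) := by
  rw [chainSet, chainSet, Finset.image_image]
  rfl

theorem stabChain_eq_iInf_chainSet (δ : NormalPChain p G Z) :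
    stabChain δ = ⨅ D ∈ chainSet δ, normalizer (D : Set G) := by
  rw [stabChain, chainSet, Finset.iInf_finset_image]
  simp

theorem isNormalPChain_chainSet (δ : NormalPChain p G Z) : IsNormalPChain p Z (chainSet δ) := by
  have hsup : (chainSet δ).sup id = δ.D (Fin.last δ.n) :=
    le_antisymm
      (Finset.sup_le (by simpa [chainSet] using fun i => δ.strictMono.monotone i.le_last))
      (Finset.le_sup (f := id) (Finset.mem_image_of_mem _ (Finset.mem_univ _)))
  refine ⟨?_, ?_, ?_, ?_, ?_⟩
  · exact Finset.mem_image.mpr ⟨0, Finset.mem_univ _, δ.first⟩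
  · simpa [chainSet, ← δ.first] using fun i => δ.strictMono.monotone (Fin.zero_le i)
  · simpa [chainSet] using δ.strictMono.monotone.isChain_range
  · simpa [chainSet] using δ.isPGroup
  · intro D hD
    obtain ⟨i, -, rfl⟩ := Finset.mem_image.mp hD
    rw [hsup]
    exact le_normalizer_of_normal_subgroupOf (hK := δ.normalInLast i)
      (δ.strictMono.monotone i.le_last)

namespace IsNormalPChain

variable {C : Finset (Subgroup G)} (h : IsNormalPChain p Z C)
include h

theorem subset {C' : Finset (Subgroup G)} (hZ : Z ∈ C') (hC' : C' ⊆ C) :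
    IsNormalPChain p Z C' where
  base_mem := hZ
  base_le D hD := h.base_le D (hC' hD)
  isChain := h.isChain.mono (Finset.coe_subset.mpr hC')
  isPGroup D hD := h.isPGroup D (hC' hD)
  sup_le_normalizer D hD := (Finset.sup_mono hC').trans (h.sup_le_normalizer D (hC' hD))

theorem sup_mem : C.sup id ∈ C :=
  sup_id_mem_of_isChain h.isChain ⟨Z, h.base_mem⟩

noncomputable def orderIsoFin : Fin (C.card - 1 + 1) ≃o C :=
  letI : LinearOrder C :=
    { (inferInstance : PartialOrder C) with
      le_total := fun a b => h.isChain.total a.2 b.2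
      toDecidableLE := Classical.decRel _ }
  monoEquivOfFin C <| by
    have := Finset.card_pos.mpr ⟨Z, h.base_mem⟩
    rw [Fintype.card_coe]
    omega

noncomputable def toChain : NormalPChain p G Z where
  n := C.card - 1
  D i := h.orderIsoFin i
  strictMono _ _ hij := h.orderIsoFin.strictMono hij
  first := by
    have hle := h.orderIsoFin.monotone (Fin.zero_le (h.orderIsoFin.symm ⟨Z, h.base_mem⟩))
    rw [OrderIso.apply_symm_apply] at hle
    exact le_antisymm hle (h.base_le _ (h.orderIsoFin 0).2)
  isPGroup i := h.isPGroup _ (h.orderIsoFin i).2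
  normalInLast i := by
    have hle : (h.orderIsoFin i : Subgroup G) ≤ h.orderIsoFin (Fin.last _) :=
      h.orderIsoFin.monotone i.le_last
    rw [normal_subgroupOf_iff_le_normalizer hle]
    exact (Finset.le_sup (f := id) (h.orderIsoFin _).2).trans
      (h.sup_le_normalizer _ (h.orderIsoFin i).2)

theorem chainSet_toChain : chainSet h.toChain = C := by
  ext E
  refine ⟨fun hE => ?_, fun hE => Finset.mem_image.mpr ⟨h.orderIsoFin.symm ⟨E, hE⟩,
    Finset.mem_univ _, by simp [toChain]⟩⟩
  obtain ⟨i, -, rfl⟩ := Finset.mem_image.mp hE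
  exact (h.orderIsoFin i).2

end IsNormalPChain

end Chains

section Pairing

variable {G : Type} [Group G] (p : ℕ) (Z : Subgroup G)

noncomputable def coreSup (C : Finset (Subgroup G)) : Subgroup G :=
  pCore p G ⊔ C.sup id

theorem IsNormalPChain.isPGroup_coreSup [Fact p.Prime] {C : Finset (Subgroup G)}
    (h : IsNormalPChain p Z C) : IsPGroup p (coreSup p C) :=
  IsPGroup.to_sup_of_normal_left isPGroup_pCore (h.isPGroup _ h.sup_mem)

variable [Z.Normal]

noncomputable def centralCore (C : Finset (Subgroup G)) : Subgroup G :=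
  pCore p G ⊓ centralizerMod Z (coreSup p C)

noncomputable def supNotAbove (C : Finset (Subgroup G)) : Subgroup G :=
  (C.filter fun D => ¬ centralCore p Z C ≤ D).sup id

noncomputable def pairingSubgroup (C : Finset (Subgroup G)) : Subgroup G :=
  supNotAbove p Z C ⊔ centralCore p Z C

noncomputable def pairing (C : Finset (Subgroup G)) : Finset (Subgroup G) :=
  toggle (pairingSubgroup p Z C) C

variable {p Z} {C : Finset (Subgroup G)}

theorem le_supNotAbove {D : Subgroup G} (hD : D ∈ C) (hY : ¬ centralCore p Z C ≤ D) :
    D ≤ supNotAbove p Z C :=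
  Finset.le_sup (f := id) (Finset.mem_filter.mpr ⟨hD, hY⟩)

theorem pairingSubgroup_le_coreSup : pairingSubgroup p Z C ≤ coreSup p C :=
  sup_le ((Finset.sup_mono (Finset.filter_subset _ C)).trans le_sup_right)
    (inf_le_left.trans le_sup_left)

theorem coreSup_insert {W : Subgroup G} (hW : W ≤ coreSup p C) :
    coreSup p (insert W C) = coreSup p C := by
  rw [coreSup, Finset.sup_insert, sup_left_comm]
  exact sup_eq_right.mpr hW

theorem pairingSubgroup_insert {W : Subgroup G} (hW : W ≤ coreSup p C)
    (hYW : centralCore p Z C ≤ W) : pairingSubgroup p Z (insert W C) = pairingSubgroup p Z C := by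
  have hY : centralCore p Z (insert W C) = centralCore p Z C := by
    rw [centralCore, coreSup_insert hW, centralCore]
  rw [pairingSubgroup, supNotAbove, hY, Finset.filter_insert, if_neg (not_not.mpr hYW)]
  rfl

variable [Fact p.Prime]

section Equivariance

variable {σ : MulAut G} (hσ : Z.map σ.toMonoidHom = Z)
include hσ

theorem centralCore_image :
    centralCore p Z (C.image (map σ.toMonoidHom)) = (centralCore p Z C).map σ.toMonoidHom := by
  rw [centralCore, centralCore, map_inf _ _ _ σ.injective, map_centralizerMod hσ, coreSup,
    coreSup, Subgroup.map_sup, map_pCore, map_finset_sup_id]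

theorem pairingSubgroup_image :
    pairingSubgroup p Z (C.image (map σ.toMonoidHom)) =
      (pairingSubgroup p Z C).map σ.toMonoidHom := by
  rw [pairingSubgroup, pairingSubgroup, supNotAbove, supNotAbove, centralCore_image hσ,
    Subgroup.map_sup, map_finset_sup_id, Finset.filter_image]
  simp only [map_le_map_iff_of_injective (f := σ.toMonoidHom) σ.injective]

theorem pairing_image :
    pairing p Z (C.image (map σ.toMonoidHom)) = (pairing p Z C).image (map σ.toMonoidHom) := by
  rw [pairing, pairing, pairingSubgroup_image hσ, image_toggle (map_injective σ.injective)]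

end Equivariance

theorem mem_normalizer_pairingSubgroup {x : G}
    (hx : ∀ D ∈ C, x ∈ normalizer (D : Set G)) :
    x ∈ normalizer (pairingSubgroup p Z C : Set G) := by
  simp only [mem_normalizer_iff_map_conj_eq] at hx ⊢
  have hC : C.image (map (MulAut.conj x).toMonoidHom) = C :=
    (Finset.image_congr hx).trans Finset.image_id'
  conv_rhs => rw [← hC]
  exact (pairingSubgroup_image (Normal.map_conj_eq Z x)).symm

theorem iInf_normalizer_insert_pairingSubgroup :
    ⨅ D ∈ insert (pairingSubgroup p Z C) C, normalizer (D : Set G) =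
      ⨅ D ∈ C, normalizer (D : Set G) := by
  rw [Finset.iInf_insert]
  exact inf_eq_right.mpr fun x hx =>
    mem_normalizer_pairingSubgroup fun D hD => mem_iInf.mp (mem_iInf.mp hx D) hD

namespace IsNormalPChain

variable [Finite G] (h : IsNormalPChain p Z C) (hlt : Z < pCore p G)
include h hlt

theorem not_centralCore_le_base : ¬ centralCore p Z C ≤ Z :=
  not_inf_centralizerMod_le isPGroup_pCore hlt h.isPGroup_coreSup

theorem supNotAbove_mem_filter :
    supNotAbove p Z C ∈ C.filter fun D => ¬ centralCore p Z C ≤ D :=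
  sup_id_mem_of_isChain (h.isChain.mono (Finset.coe_subset.mpr (Finset.filter_subset _ C)))
    ⟨Z, Finset.mem_filter.mpr ⟨h.base_mem, h.not_centralCore_le_base hlt⟩⟩

theorem pairingSubgroup_le {D : Subgroup G} (hD : D ∈ C) (hY : centralCore p Z C ≤ D) :
    pairingSubgroup p Z C ≤ D := by
  obtain ⟨hmC, hmY⟩ := Finset.mem_filter.mp (h.supNotAbove_mem_filter hlt)
  rcases h.isChain.total hmC hD with hle | hle
  · exact sup_le hle hY
  · exact absurd (hY.trans hle) hmY

theorem base_le_pairingSubgroup : Z ≤ pairingSubgroup p Z C :=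
  (le_supNotAbove h.base_mem (h.not_centralCore_le_base hlt)).trans le_sup_left

theorem pairingSubgroup_ne_base : pairingSubgroup p Z C ≠ Z := fun hW =>
  h.not_centralCore_le_base hlt (le_sup_right.trans hW.le)

theorem le_or_le_pairingSubgroup {D : Subgroup G} (hD : D ∈ C) :
    pairingSubgroup p Z C ≤ D ∨ D ≤ pairingSubgroup p Z C := by
  by_cases hY : centralCore p Z C ≤ D
  · exact .inl (h.pairingSubgroup_le hlt hD hY)
  · exact .inr ((le_supNotAbove hD hY).trans le_sup_left)

theorem insert_pairingSubgroup : IsNormalPChain p Z (insert (pairingSubgroup p Z C) C) where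
  base_mem := Finset.mem_insert_of_mem h.base_mem
  base_le := (Finset.forall_mem_insert _ _ _).mpr ⟨h.base_le_pairingSubgroup hlt, h.base_le⟩
  isChain := by
    rw [Finset.coe_insert]
    exact h.isChain.insert fun D hD _ => h.le_or_le_pairingSubgroup hlt hD
  isPGroup := (Finset.forall_mem_insert _ _ _).mpr
    ⟨h.isPGroup_coreSup.to_le pairingSubgroup_le_coreSup, h.isPGroup⟩
  sup_le_normalizer := by
    rw [Finset.sup_insert, Finset.forall_mem_insert]
    refine ⟨sup_le le_normalizer fun x hx => mem_normalizer_pairingSubgroup fun D hD =>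
      h.sup_le_normalizer D hD hx, fun D hD => ?_⟩
    have hY : centralCore p Z C ≤ normalizer (D : Set G) :=
      inf_le_right.trans (centralizerMod_le_normalizer (h.base_le D hD)
        ((Finset.le_sup (f := id) hD).trans le_sup_right))
    exact sup_le (sup_le ((Finset.sup_mono (Finset.filter_subset _ C)).trans
      (h.sup_le_normalizer D hD)) hY) (h.sup_le_normalizer D hD)

theorem pairingSubgroup_pairing : pairingSubgroup p Z (pairing p Z C) = pairingSubgroup p Z C := by
  have hYW : centralCore p Z C ≤ pairingSubgroup p Z C := le_sup_right
  unfold CTC.pairing toggle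
  split_ifs with hW
  · obtain ⟨hmC, hmY⟩ := Finset.mem_filter.mp (h.supNotAbove_mem_filter hlt)
    have hm : supNotAbove p Z C ∈ C.erase (pairingSubgroup p Z C) :=
      Finset.mem_erase.mpr ⟨fun hmW => hmY (hmW ▸ hYW), hmC⟩
    have hWC' : pairingSubgroup p Z C ≤ coreSup p (C.erase (pairingSubgroup p Z C)) :=
      sup_le ((Finset.le_sup (f := id) hm).trans le_sup_right) (inf_le_left.trans le_sup_left)
    have hY : centralCore p Z (C.erase (pairingSubgroup p Z C)) = centralCore p Z C := by
      rw [centralCore, centralCore, ← coreSup_insert hWC', Finset.insert_erase hW]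
    conv_rhs => rw [← Finset.insert_erase hW]
    exact (pairingSubgroup_insert hWC' (hY ▸ hYW)).symm
  · exact pairingSubgroup_insert pairingSubgroup_le_coreSup hYW

theorem pairing_pairing : pairing p Z (pairing p Z C) = C :=
  toggle_toggle_of_eq (h.pairingSubgroup_pairing hlt)

theorem iInf_normalizer_pairing :
    ⨅ D ∈ pairing p Z C, normalizer (D : Set G) = ⨅ D ∈ C, normalizer (D : Set G) := by
  by_cases hW : pairingSubgroup p Z C ∈ C
  · have hC : insert (pairingSubgroup p Z (pairing p Z C)) (pairing p Z C) = C := by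
      rw [h.pairingSubgroup_pairing hlt, CTC.pairing, toggle, if_pos hW, Finset.insert_erase hW]
    conv_rhs => rw [← hC]
    exact iInf_normalizer_insert_pairingSubgroup.symm
  · rw [CTC.pairing, toggle, if_neg hW]
    exact iInf_normalizer_insert_pairingSubgroup

theorem pairing : IsNormalPChain p Z (pairing p Z C) := by
  unfold CTC.pairing toggle
  split_ifs
  · exact h.subset (Finset.mem_erase.mpr ⟨(h.pairingSubgroup_ne_base hlt).symm, h.base_mem⟩)
      (Finset.erase_subset _ _)
  · exact h.insert_pairingSubgroup hlt

end IsNormalPChain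

end Pairing

theorem chain_pairing_general {G : Type} [Group G] [Fintype G]
    (p : ℕ) (hp : p.Prime) (Z : Subgroup G)
    (hZ : Z ≤ Subgroup.center G)
    (hlt : Z < pCore p G) :
    ∃ f : NormalPChain p G Z → NormalPChain p G Z,
      (∀ δ, f (f δ) = δ) ∧
      (∀ δ, (f δ).n = δ.n + 1 ∨ (f δ).n + 1 = δ.n) ∧
      (∀ δ, stabChain (f δ) = stabChain δ) ∧
      (∀ (σ : MulAut G) (hσ : Z.map σ.toMonoidHom = Z) (δ),
        f (mapChain σ hσ δ) = mapChain σ hσ (f δ)) := by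
  have : Fact p.Prime := ⟨hp⟩
  have : Z.Normal := normal_of_le_center hZ
  have hC (δ : NormalPChain p G Z) := (isNormalPChain_chainSet δ).pairing hlt
  let f δ := (hC δ).toChain
  have hf (δ) : chainSet (f δ) = pairing p Z (chainSet δ) := (hC δ).chainSet_toChain
  refine ⟨f, fun δ => chainSet_injective ?_, fun δ => ?_, fun δ => ?_,
    fun σ hσ δ => chainSet_injective ?_⟩
  · rw [hf, hf, (isNormalPChain_chainSet δ).pairing_pairing hlt]
  · have := card_toggle (pairingSubgroup p Z (chainSet δ)) (chainSet δ)
    rw [← pairing, ← hf, card_chainSet, card_chainSet] at this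
    omega
  · rw [stabChain_eq_iInf_chainSet, stabChain_eq_iInf_chainSet, hf,
      (isNormalPChain_chainSet δ).iInf_normalizer_pairing hlt]
  · rw [hf, chainSet_mapChain, chainSet_mapChain, hf, pairing_image hσ]

/-- if `Z ≤ Z(G)` is a `p`-subgroup with `Z < O_p(G)`, there is a
self-inverse bijection `*` on the normal `p`-chains starting at `Z`, changing the
length by exactly one, preserving stabilizers, and commuting with the action of
every automorphism of `G` fixing `Z` (in particular with `G`-conjugation). -/
theorem chain_pairing {G : Type} [Group G] [Fintype G]
    (p : ℕ) (hp : p.Prime) (Z : Subgroup G)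
    (hZ : Z ≤ Subgroup.center G) (hZp : IsPGroup p Z)
    (hlt : Z < pCore p G) :
    ∃ f : NormalPChain p G Z → NormalPChain p G Z,
      (∀ δ, f (f δ) = δ) ∧
      (∀ δ, (f δ).n = δ.n + 1 ∨ (f δ).n + 1 = δ.n) ∧
      (∀ δ, stabChain (f δ) = stabChain δ) ∧
      (∀ (σ : MulAut G) (hσ : Z.map σ.toMonoidHom = Z) (δ),
        f (mapChain σ hσ δ) = mapChain σ hσ (f δ)) :=
  chain_pairing_general p hp Z hZ hlt

end CTC
end

section
/- Let N ⊴ G be finite groups and ψ_0 ∈ Irr(H_0) with H_0 ≤ H ≤ G, such that ψ := ψ_0^H is irreducible. Then for any x ∈ C_H(M) where M ⊴ H with H = H_0 M, setting J = ⟨M, x⟩ and J_0 = J ∩ H_0: if every irreducible character of J lying over a fixed irreducible character of M is induced from J_0, then x ∈ J_0. -/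
open scoped BigOperators Classical

namespace CTC

noncomputable def Res {G : Type} [Group G] {H K : Subgroup G} (hKH : K ≤ H)
    (χ : ↥H → ℂ) : ↥K → ℂ := fun k => χ ⟨k.1, hKH k.2⟩

/-- The character of `H` induced from a character `φ` of a subgroup `K ≤ H`. -/
noncomputable def IndRel {G : Type} [Group G] [Fintype G] (H K : Subgroup G)
    (φ : ↥K → ℂ) : ↥H → ℂ := fun g =>
  (Fintype.card ↥K : ℂ)⁻¹ *
    ∑ x : ↥H, if h : (x : G) * (g : G) * (x : G)⁻¹ ∈ K then
      φ ⟨(x : G) * (g : G) * (x : G)⁻¹, h⟩ else 0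

end CTC

/-!
Suppose `x ∉ J₀`. As `x` centralizes `M`, it is central in `J = ⟨M, x⟩`, so by Schur's lemma it
acts as a nonzero scalar in every irreducible representation of `J`: no irreducible character of
`J` vanishes at `x`. A character induced from `J₀` does vanish at a central element outside `J₀`,
so by hypothesis no irreducible character of `J` lies over `φ`. This is absurd, because the
regular character of `J` is a sum of irreducible characters and lies over `φ`:
`⟨(ρ_reg)|_M, φ⟩ = |J| / |M| · φ(1) ≠ 0`.
-/

universe u

open scoped ComplexOrder Matrix in
theorem Matrix.trace_map_inv_eq_star {K n : Type*} [Group K] [Fintype K] [Fintype n]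
    [DecidableEq n] (R : K →* Matrix n n ℂ) (g : K) :
    (R g⁻¹).trace = star (R g).trace := by
  -- unitary trick: `R` preserves the positive definite Hermitian form `B`
  set B := ∑ h : K, (R h)ᴴ * R h
  have hB : IsUnit B.det := (isUnit_iff_isUnit_det B).mp (posDef_sum Finset.univ_nonempty
    fun h _ => .conjTranspose_mul_self _
      (mulVec_injective_iff_isUnit.mpr ((Group.isUnit h).map R))).isUnit
  have hBinv : (R g)ᴴ * B * R g = B := calc
    _ = ∑ h, (R (h * g))ᴴ * R (h * g) := by
      simp [B, Finset.mul_sum, Finset.sum_mul, conjTranspose_mul, Matrix.mul_assoc]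
    _ = B := Fintype.sum_equiv (Equiv.mulRight g) _ _ fun _ => rfl
  have hconj : B * R g⁻¹ = (R g)ᴴ * B := by
    conv_lhs => rw [← hBinv]
    rw [Matrix.mul_assoc, ← map_mul, mul_inv_cancel, map_one, Matrix.mul_one]
  rw [← nonsing_inv_mul_cancel_left B (R g⁻¹) hB, hconj, trace_mul_comm, Matrix.mul_assoc,
    mul_nonsing_inv _ hB, Matrix.mul_one, trace_conjTranspose]

theorem Subgroup.mem_center_sup_zpowers {G : Type*} [Group G] {M : Subgroup G} {x : G}
    (hx : x ∈ centralizer (M : Set G)) :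
    (⟨x, mem_sup_right (mem_zpowers x)⟩ : ↥(M ⊔ zpowers x)) ∈ center ↥(M ⊔ zpowers x) := by
  have hle : M ⊔ zpowers x ≤ centralizer {x} :=
    sup_le (fun m hm => mem_centralizer_singleton_iff.mpr (hx m hm))
      (zpowers_le.mpr (mem_centralizer_singleton_iff.mpr rfl))
  rw [mem_center_iff]
  exact fun u => Subtype.ext (mem_centralizer_singleton_iff.mp (hle u.2))

namespace Representation

open scoped MonoidAlgebra

variable {K k : Type*} [Group K] [Field k]

theorem character_of_subsingleton {V : Type*} [AddCommGroup V] [Module k V] [Subsingleton V]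
    (ρ : Representation k K V) : ρ.character = 0 := by
  ext g
  simp [character, Subsingleton.elim (ρ g) 0]

theorem character_eq_add_of_isCompl {V : Type*} [AddCommGroup V] [Module k V]
    [FiniteDimensional k V] (ρ : Representation k K V) {p q : Subrepresentation ρ}
    (hpq : IsCompl p q) :
    ρ.character = p.toRepresentation.character + q.toRepresentation.character := by
  have hpq' : IsCompl p.toSubmodule q.toSubmodule :=
    ⟨disjoint_iff.mpr (congrArg Subrepresentation.toSubmodule hpq.inf_eq_bot),
      codisjoint_iff.mpr (congrArg Subrepresentation.toSubmodule hpq.sup_eq_top)⟩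
  have hint : DirectSum.IsInternal ![p.toSubmodule, q.toSubmodule] :=
    (DirectSum.isInternal_submodule_iff_isCompl _ (i := 0) (j := 1) (by decide)
      (by ext i; fin_cases i <;> simp)).mpr hpq'
  ext g
  have hmaps : ∀ i, Set.MapsTo (ρ g) (![p.toSubmodule, q.toSubmodule] i)
      (![p.toSubmodule, q.toSubmodule] i) := by
    intro i
    fin_cases i
    exacts [fun v hv => p.apply_mem_toSubmodule g hv, fun v hv => q.apply_mem_toSubmodule g hv]
  rw [character, LinearMap.trace_eq_sum_trace_restrict hint hmaps, Fin.sum_univ_two]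
  rfl

theorem isIrreducible_of_forall_ne_bot_eq_top {V : Type*} [AddCommGroup V] [Module k V]
    [Nontrivial V] (ρ : Representation k K V)
    (h : ∀ p : Subrepresentation ρ, p ≠ ⊥ → p = ⊤) : ρ.IsIrreducible where
  exists_pair_ne := ⟨⊥, ⊤, fun h => bot_ne_top (congrArg Subrepresentation.toSubmodule h)⟩
  eq_bot_or_eq_top p := or_iff_not_imp_left.mpr (h p)

-- By Maschke's theorem every character is a sum of irreducible characters.
theorem map_character_eq_zero [Finite K] [NeZero (Nat.card K : k)] {A : Type*}
    [AddCommMonoid A] (F : (K → k) →+ A)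
    (hF : ∀ (W : Type u) [AddCommGroup W] [Module k W] [FiniteDimensional k W]
      (σ : Representation k K W), σ.IsIrreducible → F σ.character = 0)
    {V : Type u} [AddCommGroup V] [Module k V] [FiniteDimensional k V]
    (ρ : Representation k K V) : F ρ.character = 0 := by
  induction h : Module.finrank k V using Nat.strong_induction_on generalizing V with
  | _ n ih =>
  obtain hV | hV := subsingleton_or_nontrivial V
  · rw [character_of_subsingleton, map_zero]
  by_cases hsplit : ∃ p : Subrepresentation ρ, p ≠ ⊥ ∧ p ≠ ⊤
  · obtain ⟨p, hp_bot, hp_top⟩ := hsplit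
    obtain ⟨q, hpq⟩ := exists_isCompl p
    have hq_top : q ≠ ⊤ := fun hq => hp_bot (eq_bot_of_isCompl_top (hq ▸ hpq))
    have hlt : ∀ r : Subrepresentation ρ, r ≠ ⊤ → Module.finrank k r.toSubmodule < n :=
      fun r hr => h ▸ Submodule.finrank_lt fun hr' => hr (Subrepresentation.toSubmodule_injective hr')
    rw [character_eq_add_of_isCompl ρ hpq, map_add, ih _ (hlt p hp_top) _ rfl,
      ih _ (hlt q hq_top) _ rfl, add_zero]
  · push Not at hsplit
    exact hF V ρ (isIrreducible_of_forall_ne_bot_eq_top ρ hsplit)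

theorem character_ne_zero_of_mem_center [IsAlgClosed k] [CharZero k] {V : Type*}
    [AddCommGroup V] [Module k V] [FiniteDimensional k V] (ρ : Representation k K V)
    [ρ.IsIrreducible] {z : K} (hz : z ∈ Subgroup.center K) : ρ.character z ≠ 0 := by
  have : Nontrivial V := IsSimpleModule.nontrivial k[K] ρ.asModule
  obtain ⟨c, hc⟩ := IsIrreducible.algebraMap_intertwiningMap_bijective_of_isAlgClosed.2
    (IntertwiningMap.centralMul ρ z hz)
  have hρz : ρ z = c • LinearMap.id := (congrArg IntertwiningMap.toLinearMap hc).symm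
  have hc0 : c ≠ 0 := by
    rintro rfl
    apply one_ne_zero (α := Module.End k V)
    rw [← map_one ρ, ← inv_mul_cancel z, map_mul, hρz, zero_smul, mul_zero]
  simp [character, hρz, hc0, Module.finrank_pos.ne']

theorem leftRegular_character_apply [Fintype K] (g : K) :
    (leftRegular k K).character g = if g = 1 then (Fintype.card K : k) else 0 := by
  let b := MonoidAlgebra.basis K k
  have hdiag : ∀ h, LinearMap.toMatrix b b (leftRegular k K g) h h = if g = 1 then 1 else 0 := by
    intro h
    rw [LinearMap.toMatrix_apply, MonoidAlgebra.basis_apply, ofMulAction_single, smul_eq_mul,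
      ← MonoidAlgebra.basis_apply, Module.Basis.repr_self, Finsupp.single_apply, mul_eq_right]
  rw [character, LinearMap.trace_eq_matrix_trace k b, Matrix.trace]
  split_ifs with hg <;> simp [hdiag, hg]

theorem character_inv_eq_star [Fintype K] {V : Type*} [AddCommGroup V] [Module ℂ V]
    [FiniteDimensional ℂ V] (ρ : Representation ℂ K V) (g : K) :
    ρ.character g⁻¹ = star (ρ.character g) := by
  let b := Module.finBasis ℂ V
  rw [character, character, LinearMap.trace_eq_matrix_trace ℂ b,
    LinearMap.trace_eq_matrix_trace ℂ b]
  exact Matrix.trace_map_inv_eq_star ((LinearMap.toMatrixAlgEquiv b).toMonoidHom.comp ρ) g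

end Representation

namespace CTC

section Characters

variable {K : Type} [Group K] [Fintype K]

theorem isChar_character {V : Type*} [AddCommGroup V] [Module ℂ V] [FiniteDimensional ℂ V]
    (ρ : Representation ℂ K V) : IsChar K ρ.character := by
  let e := (Module.finBasis ℂ V).equivFun
  exact ⟨_, (e.conjAlgEquiv ℂ).toMonoidHom.comp ρ, fun g => (LinearMap.trace_conj' (ρ g) e).symm⟩

theorem isIrrChar_character {V : Type*} [AddCommGroup V] [Module ℂ V] [FiniteDimensional ℂ V]
    (ρ : Representation ℂ K V) [ρ.IsIrreducible] : IsIrrChar K ρ.character := by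
  refine ⟨isChar_character ρ, ?_⟩
  have : Invertible (Nat.card K : ℂ) := invertibleOfNonzero (NeZero.ne _)
  have h := ρ.char_orthonormal ρ
  simp only [Representation.character_inv_eq_star, Nat.card_eq_fintype_card] at h
  rw [cfInner, h, if_pos ⟨.refl ρ⟩]

theorem IsIrrChar.apply_one_ne_zero {χ : K → ℂ} (hχ : IsIrrChar K χ) : χ 1 ≠ 0 := by
  obtain ⟨⟨n, ρ, hρ⟩, hnorm⟩ := hχ
  intro h1
  rw [hρ, map_one, LinearMap.trace_one, Module.finrank_fin_fun, Nat.cast_eq_zero] at h1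
  subst h1
  simp [cfInner, hρ, Subsingleton.elim (ρ _) 0] at hnorm

theorem cfInner_add_left (φ₁ φ₂ ψ : K → ℂ) :
    cfInner K (φ₁ + φ₂) ψ = cfInner K φ₁ ψ + cfInner K φ₂ ψ := by
  simp only [cfInner, Pi.add_apply, add_mul, Finset.sum_add_distrib, mul_add]

end Characters

variable {G : Type} [Group G] [Fintype G]

/-- `χ ↦ ⟨χ|_K, φ⟩`, which is nonzero exactly for the characters `χ` lying over `φ`. -/
noncomputable def cfInnerRes {H K : Subgroup G} (hKH : K ≤ H) (φ : ↥K → ℂ) : (↥H → ℂ) →+ ℂ where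
  toFun χ := cfInner K (Res hKH χ) φ
  map_zero' := by simp [cfInner, Res]
  map_add' χ₁ χ₂ := cfInner_add_left _ _ φ

theorem cfInnerRes_leftRegular_character {H K : Subgroup G} (hKH : K ≤ H) (φ : ↥K → ℂ) :
    cfInnerRes hKH φ (Representation.leftRegular ℂ H).character =
      (Fintype.card K : ℂ)⁻¹ * (Fintype.card H * star (φ 1)) := by
  change cfInner K (Res hKH _) φ = _
  rw [cfInner, Finset.sum_eq_single 1]
  · simp [Res, Representation.leftRegular_character_apply]
  · intro k _ hk
    simp [Res, Representation.leftRegular_character_apply, hk]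
  · simp

theorem IndRel_apply_eq_zero_of_mem_center {H K : Subgroup G} (φ : ↥K → ℂ) {z : ↥H}
    (hz : z ∈ Subgroup.center ↥H) (hzK : (z : G) ∉ K) : IndRel H K φ z = 0 := by
  refine mul_eq_zero_of_right _ (Finset.sum_eq_zero fun u _ => dif_neg ?_)
  rwa [← Subgroup.coe_mul, Subgroup.mem_center_iff.mp hz u, Subgroup.coe_mul, mul_inv_cancel_right]

theorem element_in_J0_general {G : Type} [Group G] [Fintype G]
    (H0 H M : Subgroup G)
    (x : G) (hx : x ∈ Subgroup.centralizer (M : Set G) ⊓ H)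
    (J J0 : Subgroup G) (hJ : J = M ⊔ Subgroup.zpowers x) (hJ0 : J0 = J ⊓ H0)
    (hMJ : M ≤ J)
    (φ : ↥M → ℂ) (hφ : IsIrrChar ↥M φ)
    (hind : ∀ χ : ↥J → ℂ, IsIrrChar ↥J χ → cfInner ↥M (Res hMJ χ) φ ≠ 0 →
      ∃ χ0 : ↥J0 → ℂ, IsIrrChar ↥J0 χ0 ∧ χ = IndRel J J0 χ0) :
    x ∈ J0 := by
  subst hJ hJ0
  by_contra hxJ0
  have hcentral := Subgroup.mem_center_sup_zpowers hx.1
  have hirr : ∀ (W : Type) [AddCommGroup W] [Module ℂ W] [FiniteDimensional ℂ W]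
      (σ : Representation ℂ _ W), σ.IsIrreducible → cfInnerRes hMJ φ σ.character = 0 := by
    intro W _ _ _ σ hσ
    by_contra hover
    obtain ⟨χ0, -, hχ⟩ := hind _ (isIrrChar_character σ) hover
    refine σ.character_ne_zero_of_mem_center hcentral ?_
    rw [hχ]
    exact IndRel_apply_eq_zero_of_mem_center χ0 hcentral hxJ0
  have hreg := Representation.map_character_eq_zero _ hirr (Representation.leftRegular ℂ _)
  rw [cfInnerRes_leftRegular_character] at hreg
  simp [hφ.apply_one_ne_zero] at hreg

/-- key step of Proposition 2.10 in the paper.  Suppose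
`ψ = ψ₀^H ∈ Irr(H)` is irreducibly induced from `H₀ ≤ H`, `M ⊴ H` with
`H = H₀M`, and `x ∈ C_H(M)`.  Set `J = ⟨M, x⟩` and `J₀ = J ∩ H₀`.  If every
irreducible character of `J` lying over a fixed `φ ∈ Irr(M)` is induced from
`J₀`, then `x ∈ J₀`. -/
theorem element_in_J0 {G : Type} [Group G] [Fintype G]
    (N H0 H M : Subgroup G) (hN : N.Normal) (hH0H : H0 ≤ H)
    (ψ0 : ↥H0 → ℂ) (hψ0 : IsIrrChar ↥H0 ψ0)
    (hψ : IsIrrChar ↥H (IndRel H H0 ψ0))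
    (hM : M.Normal) (hMH : M ≤ H) (hH : H0 ⊔ M = H)
    (x : G) (hx : x ∈ Subgroup.centralizer (M : Set G) ⊓ H)
    (J J0 : Subgroup G) (hJ : J = M ⊔ Subgroup.zpowers x) (hJ0 : J0 = J ⊓ H0)
    (hMJ : M ≤ J)
    (φ : ↥M → ℂ) (hφ : IsIrrChar ↥M φ)
    (hind : ∀ χ : ↥J → ℂ, IsIrrChar ↥J χ → cfInner ↥M (Res hMJ χ) φ ≠ 0 →
      ∃ χ0 : ↥J0 → ℂ, IsIrrChar ↥J0 χ0 ∧ χ = IndRel J J0 χ0) :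
    x ∈ J0 :=
  element_in_J0_general H0 H M x hx J J0 hJ hJ0 hMJ φ hφ hind

end CTC
end
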